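/- arXiv:1102.4478 — 3 statements merged into one kernel-verified Lean document; each statement's English description precedes it below -/
import Mathlib

section
/- Let γ₁, γ₂ : ℝ → ℝ² be C^∞ regular curves, each with a positive generic inflection point at t = 0. Then γ₁ and γ₂ have the same affine inflectional curvature μ_I at t = 0 if and only if there exist an orientation preserving equi-affine transformation T of ℝ² and a C^∞ change of parameter u = u(t) near t = 0 with u(0) = 0 and du/dt > 0 such that T(γ₂(u(t))) − γ₁(t) has order higher than t⁴ at t = 0. -/
noncomputable section
open Real Set Filter Topology

/-- The determinant `[a, b] = a₁b₂ − a₂b₁` of two vectors in the plane. -/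
def det2 (a b : ℝ × ℝ) : ℝ := a.1 * b.2 - a.2 * b.1

/-- The Euclidean norm on `ℝ × ℝ`. -/
def enorm2 (a : ℝ × ℝ) : ℝ := Real.sqrt (a.1 ^ 2 + a.2 ^ 2)

/-- The Euclidean arclength parameter of `γ` based at `0`. -/
def sG (γ : ℝ → ℝ × ℝ) (t : ℝ) : ℝ := ∫ u in (0:ℝ)..t, enorm2 (deriv γ u)

/-- The affine arclength parameter of `γ` based at `0`. -/
def sA (γ : ℝ → ℝ × ℝ) (t : ℝ) : ℝ :=
  ∫ u in (0:ℝ)..t, |det2 (deriv γ u) (iteratedDeriv 2 γ u)| ^ ((1:ℝ)/3)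

/-- The Euclidean curvature `κ_g = [γ', γ'']/‖γ'‖³`. -/
def kappaG (γ : ℝ → ℝ × ℝ) (t : ℝ) : ℝ :=
  det2 (deriv γ t) (iteratedDeriv 2 γ t) / enorm2 (deriv γ t) ^ 3

/-- The affine curvature `κ_A`. -/
def kappaA (γ : ℝ → ℝ × ℝ) (t : ℝ) : ℝ :=
  (3 * det2 (deriv γ t) (iteratedDeriv 2 γ t) * det2 (deriv γ t) (iteratedDeriv 4 γ t)
    + 12 * det2 (deriv γ t) (iteratedDeriv 2 γ t)
        * det2 (iteratedDeriv 2 γ t) (iteratedDeriv 3 γ t)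
    - 5 * det2 (deriv γ t) (iteratedDeriv 3 γ t) ^ 2)
  / (9 * |det2 (deriv γ t) (iteratedDeriv 2 γ t)| ^ ((8:ℝ)/3))

/-- `γ` has a 3/2-cusp at `t = 0`. -/
def HasCusp (γ : ℝ → ℝ × ℝ) : Prop :=
  deriv γ 0 = 0 ∧ det2 (iteratedDeriv 2 γ 0) (iteratedDeriv 3 γ 0) ≠ 0

/-- The Euclidean cuspidal curvature at a 3/2-cusp `t = 0`. -/
def muG (γ : ℝ → ℝ × ℝ) : ℝ :=
  det2 (iteratedDeriv 2 γ 0) (iteratedDeriv 3 γ 0) / enorm2 (iteratedDeriv 2 γ 0) ^ ((5:ℝ)/2)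

/-- The affine cuspidal curvature at a 3/2-cusp `t = 0`. -/
def muA (γ : ℝ → ℝ × ℝ) : ℝ :=
  (24 * det2 (iteratedDeriv 2 γ 0) (iteratedDeriv 3 γ 0)
      * det2 (iteratedDeriv 2 γ 0) (iteratedDeriv 5 γ 0)
   + 60 * det2 (iteratedDeriv 2 γ 0) (iteratedDeriv 3 γ 0)
      * det2 (iteratedDeriv 3 γ 0) (iteratedDeriv 4 γ 0)
   - 35 * det2 (iteratedDeriv 2 γ 0) (iteratedDeriv 4 γ 0) ^ 2)
  / |det2 (iteratedDeriv 2 γ 0) (iteratedDeriv 3 γ 0)| ^ ((12:ℝ)/5)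

/-- `γ` (regular at `0`) has a generic inflection point at `t = 0`. -/
def HasGenericInflection (γ : ℝ → ℝ × ℝ) : Prop :=
  deriv γ 0 ≠ 0 ∧ det2 (deriv γ 0) (iteratedDeriv 2 γ 0) = 0 ∧
    det2 (deriv γ 0) (iteratedDeriv 3 γ 0) ≠ 0

/-- The affine inflectional curvature at a generic inflection point `t = 0`. -/
def muI (γ : ℝ → ℝ × ℝ) : ℝ :=
  Real.sign (det2 (deriv γ 0) (iteratedDeriv 3 γ 0)) *
    (det2 (deriv γ 0) (iteratedDeriv 4 γ 0)
      - 6 * det2 (iteratedDeriv 2 γ 0) (iteratedDeriv 3 γ 0))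
  / |det2 (deriv γ 0) (iteratedDeriv 3 γ 0)| ^ ((5:ℝ)/4)

/-- The affine map `x ↦ Ax + v` on the plane, with `A = (a b; c d)`. -/
def applyAff (a b c d : ℝ) (v : ℝ × ℝ) (p : ℝ × ℝ) : ℝ × ℝ :=
  (a * p.1 + b * p.2 + v.1, c * p.1 + d * p.2 + v.2)

/-!
The condition on the right-hand side only involves 4-jets at `0`. If `a k`, `b k`, `c k` are the
Taylor coefficients of `γ₂`, `γ₁`, `u` and `T = L + v`, then `T (γ₂ (u t)) - γ₁ t = o(t⁴)` exactly
when `L` maps the coefficients of the composed jet (`jetComp a c`) to those of `γ₁`, and `v`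
matches the constant terms. At an inflection (`[a₁, a₂] = 0`) such an `L` with `det L = 1`
multiplies `D = [a₁, a₃]` by `c₁⁴` and `N = [a₁, a₄] - 3 [a₂, a₃]` by `c₁⁵`, so `N / D^(5/4)`,
a constant multiple of `μ_I`, is invariant. Conversely, when these ratios agree,
`c₁ = (D_b / D_a)^(1/4)` makes the equations solvable with `L a₁ = b₁ / c₁`, `L a₃ = b₃ / c₁³`
and a polynomial `u`.
-/

open Asymptotics

section Jets

variable {E : Type*} [NormedAddCommGroup E] [NormedSpace ℝ E]

def jetEval (n : ℕ) (d : ℕ → E) (t : ℝ) : E := ∑ k ∈ Finset.range (n + 1), t ^ k • d k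

theorem jetEval_succ_eq_add_smul (n : ℕ) (d : ℕ → E) (t : ℝ) :
    jetEval (n + 1) d t = d 0 + t • jetEval n (fun k => d (k + 1)) t := by
  simp only [jetEval, Finset.sum_range_succ' _ (n + 1), Finset.smul_sum, smul_smul, pow_succ']
  simp [add_comm]

theorem contDiff_jetEval (n : ℕ) (d : ℕ → E) {m : WithTop ℕ∞} : ContDiff ℝ m (jetEval n d) := by
  unfold jetEval; fun_prop

theorem hasDerivAt_jetEval_zero (n : ℕ) (d : ℕ → E) : HasDerivAt (jetEval (n + 1) d) (d 1) 0 := by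
  have h := HasDerivAt.fun_sum (u := Finset.range (n + 2))
    fun k _ => (hasDerivAt_pow k (0 : ℝ)).smul_const (d k)
  convert h using 1
  · ext t; simp [jetEval]
  · have hvanish : ∀ k ∈ Finset.range (n + 2), k ≠ 1 → ((k : ℝ) * 0 ^ (k - 1)) • d k = 0 := by
      intro k _ hk
      simp only [smul_eq_zero, mul_eq_zero, Nat.cast_eq_zero, pow_eq_zero_iff', ne_eq, true_and]
      omega
    rw [Finset.sum_eq_single 1 hvanish (by simp)]
    simp

theorem tendsto_inv_pow_smul_iff_isLittleO {f : ℝ → E} {n : ℕ} :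
    Tendsto (fun t => (t ^ n)⁻¹ • f t) (𝓝[≠] 0) (𝓝 0) ↔ f =o[𝓝[≠] 0] (· ^ n) := by
  rw [← isLittleOTVS_iff_isLittleO (𝕜 := ℝ), isLittleOTVS_iff_tendsto_inv_smul]
  filter_upwards [self_mem_nhdsWithin] with t ht h
  exact absurd (pow_eq_zero_iff'.mp h).1 ht

theorem jetEval_isLittleO_iff {n : ℕ} {d : ℕ → E} :
    jetEval n d =o[𝓝[≠] 0] (· ^ n) ↔ ∀ k ≤ n, d k = 0 := by
  refine ⟨fun h => ?_, fun h => ?_⟩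
  · induction n generalizing d with
    | zero =>
      rw [show jetEval 0 d = fun _ => d 0 from funext fun t => by simp [jetEval]] at h
      intro k hk
      obtain rfl : k = 0 := by omega
      simpa using h
    | succ n ih =>
      have hd0 : d 0 = 0 := by
        have hlim : Tendsto (jetEval (n + 1) d) (𝓝[≠] 0) (𝓝 (d 0)) := by
          have := (contDiff_jetEval (n + 1) d (m := 0)).continuous.tendsto 0
          simpa [jetEval, Finset.sum_range_succ'] using this.mono_left nhdsWithin_le_nhds
        refine tendsto_nhds_unique hlim (h.trans_tendsto ?_)
        exact ((continuous_pow (n + 1)).tendsto' 0 0 (by simp)).mono_left nhdsWithin_le_nhds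
      have htail : jetEval n (fun k => d (k + 1)) =o[𝓝[≠] 0] (· ^ n) := by
        have := (isBigO_refl (fun t : ℝ => t⁻¹) (𝓝[≠] 0)).smul_isLittleO h
        refine this.congr' ?_ ?_ <;> filter_upwards [self_mem_nhdsWithin] with t ht
        · rw [jetEval_succ_eq_add_smul, hd0, zero_add, inv_smul_smul₀ ht]
        · rw [smul_eq_mul, pow_succ', inv_mul_cancel_left₀ ht]
      intro k hk
      rcases k with _ | k
      · exact hd0
      · exact ih htail k (by omega)
  · have : jetEval n d = 0 := funext fun t =>
      Finset.sum_eq_zero fun k hk => by simp [h k (Finset.mem_range_succ_iff.mp hk)]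
    rw [this]
    exact isLittleO_zero _ _

theorem iteratedDeriv_eq_factorial_smul_taylorCoeffWithin (γ : ℝ → E) (k : ℕ) :
    iteratedDeriv k γ 0 = (k.factorial : ℝ) • taylorCoeffWithin γ k univ 0 := by
  rw [taylorCoeffWithin, iteratedDerivWithin_univ, smul_inv_smul₀ (by positivity)]

theorem isLittleO_sub_jetEval_taylorCoeffWithin {f : ℝ → E} {s : Set ℝ} {n : ℕ}
    (hs : Convex ℝ s) (h0 : (0 : ℝ) ∈ s) (hf : ContDiffOn ℝ n f s) :
    (fun t => f t - jetEval n (fun k => taylorCoeffWithin f k s 0) t) =o[𝓝[s] 0] (· ^ n) := by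
  convert taylor_isLittleO hs h0 hf using 3 with t
  · simp [jetEval, taylor_within_apply, taylorCoeffWithin, smul_smul, mul_comm]
  · simp

/-- The 4-jet of a composition (Faà di Bruno's formula, for `c 0 = 0`). -/
def jetComp (a : ℕ → E) (c : ℕ → ℝ) : ℕ → E
  | 0 => a 0
  | 1 => c 1 • a 1
  | 2 => c 2 • a 1 + c 1 ^ 2 • a 2
  | 3 => c 3 • a 1 + (2 * c 1 * c 2) • a 2 + c 1 ^ 3 • a 3
  | 4 => c 4 • a 1 + (2 * c 1 * c 3 + c 2 ^ 2) • a 2 + (3 * c 1 ^ 2 * c 2) • a 3 + c 1 ^ 4 • a 4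
  | _ => 0

theorem jetEval_comp_sub_jetEval_jetComp_isBigO (a : ℕ → E) {c : ℕ → ℝ} (hc0 : c 0 = 0) :
    (fun t => jetEval 4 a (jetEval 4 c t) - jetEval 4 (jetComp a c) t) =O[𝓝 0] (· ^ 5) := by
  -- the remainder comes from `jetEval 4 c t = t * V t` with `V t = c 1 + t * W t`
  set W : ℝ → ℝ := fun t => c 2 + c 3 * t + c 4 * t ^ 2
  set V : ℝ → ℝ := fun t => c 1 + t * W t
  set R : ℝ → E := fun t => (2 * c 1 * c 4 + (c 3 + c 4 * t) * (W t + c 2)) • a 2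
    + (3 * c 1 ^ 2 * (c 3 + c 4 * t) + 3 * c 1 * W t ^ 2 + t * W t ^ 3) • a 3
    + (W t * (V t ^ 3 + c 1 * V t ^ 2 + c 1 ^ 2 * V t + c 1 ^ 3)) • a 4
  have hR : Continuous R := by fun_prop
  have hexp : ∀ t, jetEval 4 a (jetEval 4 c t) - jetEval 4 (jetComp a c) t = t ^ 5 • R t := by
    intro t
    simp only [jetEval, jetComp, Finset.sum_range_succ, Finset.sum_range_zero, hc0, R, V, W,
      smul_eq_mul]
    match_scalars <;> ring
  simp_rw [hexp]
  exact ((isBigO_refl (· ^ 5) (𝓝 (0 : ℝ))).smul ((hR.tendsto 0).isBigO_one ℝ)).congr_right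
    fun t => smul_eq_mul _ _ |>.trans (mul_one _)

theorem isLittleO_comp_sub_jetEval_jetComp {γ : ℝ → E} (hγ : ContDiff ℝ 4 γ) {u : ℝ → ℝ}
    {c : ℕ → ℝ} (hc0 : c 0 = 0) (hu : (fun t => u t - jetEval 4 c t) =o[𝓝 0] (· ^ 4)) :
    (fun t => γ (u t) - jetEval 4 (jetComp (fun k => taylorCoeffWithin γ k univ 0) c) t)
      =o[𝓝 0] (· ^ 4) := by
  set a := fun k => taylorCoeffWithin γ k univ 0
  have hU0 : jetEval 4 c 0 = 0 := by simp [jetEval, Finset.sum_range_succ, hc0]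
  have hU : Tendsto (jetEval 4 c) (𝓝 0) (𝓝 0) := by
    simpa [hU0] using (contDiff_jetEval 4 c (m := 0)).continuous.tendsto 0
  have hUO : jetEval 4 c =O[𝓝 0] fun t => t := by
    simpa [hU0] using (hasDerivAt_jetEval_zero 3 c).isBigO_sub
  have hu0 : Tendsto u (𝓝 0) (𝓝 0) := by
    have h4 : Tendsto (· ^ 4 : ℝ → ℝ) (𝓝 0) (𝓝 0) :=
      (continuous_pow 4).tendsto' 0 0 (by simp)
    simpa using (hu.trans_tendsto h4).add hU
  have hreparam : (fun t => γ (u t) - γ (jetEval 4 c t)) =o[𝓝 0] (· ^ 4) :=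
    (((hγ.contDiffAt.hasStrictFDerivAt (by norm_num)).isBigO_sub.comp_tendsto
      (hu0.prodMk_nhds hU)).trans_isLittleO hu)
  have htaylor : (fun t => γ (jetEval 4 c t) - jetEval 4 a (jetEval 4 c t)) =o[𝓝 0] (· ^ 4) := by
    have h := isLittleO_sub_jetEval_taylorCoeffWithin convex_univ (mem_univ 0) hγ.contDiffOn
    rw [nhdsWithin_univ] at h
    exact (h.comp_tendsto hU).trans_isBigO (hUO.pow 4)
  have hpoly := (jetEval_comp_sub_jetEval_jetComp_isBigO a hc0).trans_isLittleO
    (isLittleO_pow_pow (by norm_num : 4 < 5))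
  refine ((hreparam.add htaylor).add hpoly).congr_left fun t => ?_
  abel

theorem isLittleO_map_comp_add_sub_iff {F : Type*} [NormedAddCommGroup F] [NormedSpace ℝ F]
    {γ₁ : ℝ → F} {γ₂ : ℝ → E} (hγ₁ : ContDiff ℝ 4 γ₁) (hγ₂ : ContDiff ℝ 4 γ₂)
    (L : E →L[ℝ] F) (v : F) {u : ℝ → ℝ} {c : ℕ → ℝ} (hc0 : c 0 = 0)
    (hu : (fun t => u t - jetEval 4 c t) =o[𝓝 0] (· ^ 4)) :
    (fun t => L (γ₂ (u t)) + v - γ₁ t) =o[𝓝[≠] 0] (· ^ 4) ↔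
      L (taylorCoeffWithin γ₂ 0 univ 0) + v = taylorCoeffWithin γ₁ 0 univ 0 ∧
      ∀ k ∈ Finset.Icc 1 4, L (jetComp (fun k => taylorCoeffWithin γ₂ k univ 0) c k) =
        taylorCoeffWithin γ₁ k univ 0 := by
  set a := fun k => taylorCoeffWithin γ₂ k univ 0
  set b := fun k => taylorCoeffWithin γ₁ k univ 0
  set e : ℕ → F := fun k => L (jetComp a c k) + (if k = 0 then v else 0) - b k
  have hrem : (fun t => L (γ₂ (u t)) + v - γ₁ t - jetEval 4 e t) =o[𝓝[≠] 0] (· ^ 4) := by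
    have h₂ := (L.isBigO_comp _ _).trans_isLittleO (isLittleO_comp_sub_jetEval_jetComp hγ₂ hc0 hu)
    have h₁ := isLittleO_sub_jetEval_taylorCoeffWithin convex_univ (mem_univ 0) hγ₁.contDiffOn
    rw [nhdsWithin_univ] at h₁
    refine ((h₂.sub h₁).mono nhdsWithin_le_nhds).congr_left fun t => ?_
    simp only [jetEval, Finset.sum_range_succ, Finset.sum_range_zero, e, a, b, map_sub, map_add,
      map_smul]
    simp only [if_true, if_false, one_ne_zero, OfNat.ofNat_ne_zero, pow_zero, pow_one, one_smul,
      add_zero, map_zero]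
    module
  have hiff : (fun t => L (γ₂ (u t)) + v - γ₁ t) =o[𝓝[≠] 0] (· ^ 4) ↔
      jetEval 4 e =o[𝓝[≠] 0] (· ^ 4) :=
    ⟨fun h => (h.sub hrem).congr_left fun t => sub_sub_cancel _ _,
      fun h => (h.add hrem).congr_left fun t => add_sub_cancel _ _⟩
  rw [hiff, jetEval_isLittleO_iff]
  simp only [e, sub_eq_zero, Finset.mem_Icc]
  constructor
  · intro h
    refine ⟨by simpa [jetComp, a, b] using h 0 (by norm_num), fun k hk => ?_⟩
    simpa [show k ≠ 0 by omega] using h k hk.2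
  · rintro ⟨h0, h⟩ k hk
    rcases Nat.eq_zero_or_pos k with rfl | hk0
    · simpa [jetComp, a, b] using h0
    · simpa [hk0.ne'] using h k ⟨hk0, hk⟩

end Jets

section PlaneJets

def planeLin (a b c d : ℝ) : ℝ × ℝ →L[ℝ] ℝ × ℝ :=
  (a • ContinuousLinearMap.fst ℝ ℝ ℝ + b • ContinuousLinearMap.snd ℝ ℝ ℝ).prod
    (c • ContinuousLinearMap.fst ℝ ℝ ℝ + d • ContinuousLinearMap.snd ℝ ℝ ℝ)

@[simp]
theorem planeLin_apply (a b c d : ℝ) (p : ℝ × ℝ) :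
    planeLin a b c d p = (a * p.1 + b * p.2, c * p.1 + d * p.2) := rfl

theorem applyAff_eq_planeLin_add (a b c d : ℝ) (v p : ℝ × ℝ) :
    applyAff a b c d v p = planeLin a b c d p + v := rfl

theorem det2_planeLin (a b c d : ℝ) (p q : ℝ × ℝ) :
    det2 (planeLin a b c d p) (planeLin a b c d q) = (a * d - b * c) * det2 p q := by
  simp only [det2, planeLin_apply]; ring

theorem det2_smul_left (s : ℝ) (p q : ℝ × ℝ) : det2 (s • p) q = s * det2 p q := by
  simp only [det2, Prod.smul_fst, Prod.smul_snd, smul_eq_mul]; ring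

theorem det2_smul_right (s : ℝ) (p q : ℝ × ℝ) : det2 p (s • q) = s * det2 p q := by
  simp only [det2, Prod.smul_fst, Prod.smul_snd, smul_eq_mul]; ring

theorem det2_smul_eq_add (p q x : ℝ × ℝ) : det2 p q • x = det2 x q • p + det2 p x • q := by
  ext <;> simp only [det2, Prod.smul_fst, Prod.smul_snd, Prod.fst_add, Prod.snd_add,
    smul_eq_mul] <;> ring

theorem eq_smul_add_smul_of_det2_ne_zero {p q : ℝ × ℝ} (h : det2 p q ≠ 0) (x : ℝ × ℝ) :
    x = (det2 x q / det2 p q) • p + (det2 p x / det2 p q) • q := by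
  rw [div_eq_inv_mul, div_eq_inv_mul, mul_smul, mul_smul, ← smul_add, ← det2_smul_eq_add,
    inv_smul_smul₀ h]

theorem eq_smul_of_det2_eq_zero {p q x : ℝ × ℝ} (h : det2 p q ≠ 0) (hx : det2 p x = 0) :
    x = (det2 x q / det2 p q) • p := by
  simpa [hx] using eq_smul_add_smul_of_det2_ne_zero h x

theorem exists_planeLin_eq {p q : ℝ × ℝ} (h : det2 p q ≠ 0) (x y : ℝ × ℝ) :
    ∃ a b c d : ℝ, a * d - b * c = det2 x y / det2 p q ∧
      planeLin a b c d p = x ∧ planeLin a b c d q = y := by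
  refine ⟨(x.1 * q.2 - y.1 * p.2) / det2 p q, (y.1 * p.1 - x.1 * q.1) / det2 p q,
    (x.2 * q.2 - y.2 * p.2) / det2 p q, (y.2 * p.1 - x.2 * q.1) / det2 p q, ?_, ?_, ?_⟩
  · field_simp
    simp only [det2]
    ring
  all_goals
    ext <;> simp only [planeLin_apply] <;> field_simp <;> simp only [det2] <;> ring

def inflDet (a : ℕ → ℝ × ℝ) : ℝ := det2 (a 1) (a 3)

def inflNum (a : ℕ → ℝ × ℝ) : ℝ := det2 (a 1) (a 4) - 3 * det2 (a 2) (a 3)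

def inflInv (a : ℕ → ℝ × ℝ) : ℝ := inflNum a / inflDet a ^ (5 / 4 : ℝ)

theorem inflDet_jetComp {a : ℕ → ℝ × ℝ} (ha2 : det2 (a 1) (a 2) = 0) (c : ℕ → ℝ) :
    inflDet (jetComp a c) = c 1 ^ 4 * inflDet a := by
  simp only [inflDet, jetComp, det2, Prod.smul_fst, Prod.smul_snd, Prod.fst_add, Prod.snd_add,
    smul_eq_mul] at ha2 ⊢
  linear_combination 2 * c 1 ^ 2 * c 2 * ha2

theorem inflNum_jetComp {a : ℕ → ℝ × ℝ} (ha2 : det2 (a 1) (a 2) = 0) (c : ℕ → ℝ) :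
    inflNum (jetComp a c) = c 1 ^ 5 * inflNum a := by
  simp only [inflNum, jetComp, det2, Prod.smul_fst, Prod.smul_snd, Prod.fst_add, Prod.snd_add,
    smul_eq_mul] at ha2 ⊢
  linear_combination (5 * c 1 ^ 2 * c 3 - 5 * c 1 * c 2 ^ 2) * ha2

theorem mul_rpow_five_div_four {c x : ℝ} (hc : 0 ≤ c) (hx : 0 ≤ x) :
    (c ^ 4 * x) ^ (5 / 4 : ℝ) = c ^ 5 * x ^ (5 / 4 : ℝ) := by
  rw [Real.mul_rpow (by positivity) hx, ← Real.rpow_natCast, ← Real.rpow_mul hc,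
    ← Real.rpow_natCast]
  norm_num

theorem inflInv_eq_of_planeLin_jetComp {A B C D : ℝ} (hdet : A * D - B * C = 1)
    {a b : ℕ → ℝ × ℝ} {c : ℕ → ℝ} (hc1 : 0 < c 1) (ha2 : det2 (a 1) (a 2) = 0)
    (ha : 0 ≤ inflDet a) (hb : ∀ k ∈ Finset.Icc 1 4, planeLin A B C D (jetComp a c k) = b k) :
    inflInv b = inflInv a := by
  have hb' : ∀ k, 1 ≤ k → k ≤ 4 → b k = planeLin A B C D (jetComp a c k) :=
    fun k h1 h4 => (hb k (Finset.mem_Icc.mpr ⟨h1, h4⟩)).symm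
  have hDet : inflDet b = c 1 ^ 4 * inflDet a := by
    rw [inflDet, hb' 1 le_rfl (by norm_num), hb' 3 (by norm_num) (by norm_num), det2_planeLin,
      hdet, one_mul, ← inflDet_jetComp ha2, inflDet]
  have hNum : inflNum b = c 1 ^ 5 * inflNum a := by
    rw [inflNum, hb' 1 le_rfl (by norm_num), hb' 2 (by norm_num) (by norm_num),
      hb' 3 (by norm_num) (by norm_num), hb' 4 (by norm_num) le_rfl, det2_planeLin,
      det2_planeLin, hdet, one_mul, one_mul, ← inflNum_jetComp ha2, inflNum]
  rw [inflInv, inflInv, hDet, hNum, mul_rpow_five_div_four hc1.le ha,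
    mul_div_mul_left _ _ (by positivity)]

theorem exists_scale_of_inflInv_eq {a b : ℕ → ℝ × ℝ} (ha : 0 < inflDet a) (hb : 0 < inflDet b)
    (h : inflInv a = inflInv b) :
    ∃ c₁ > 0, inflDet b = c₁ ^ 4 * inflDet a ∧ inflNum b = c₁ ^ 5 * inflNum a := by
  set c₁ := (inflDet b / inflDet a) ^ (1 / 4 : ℝ)
  have hc₁ : 0 < c₁ := by positivity
  have hDet : inflDet b = c₁ ^ 4 * inflDet a := by
    rw [← Real.rpow_natCast, ← Real.rpow_mul (by positivity)]
    norm_num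
    field_simp
  refine ⟨c₁, hc₁, hDet, ?_⟩
  rw [inflInv, inflInv, hDet, mul_rpow_five_div_four hc₁.le ha.le] at h
  have : 0 < inflDet a ^ (5 / 4 : ℝ) := by positivity
  field_simp at h
  linear_combination -h

theorem exists_planeLin_eq_inv_smul {a b : ℕ → ℝ × ℝ} (ha : 0 < inflDet a) {c₁ : ℝ}
    (hc₁ : 0 < c₁) (hDet : inflDet b = c₁ ^ 4 * inflDet a) :
    ∃ A B C D : ℝ, A * D - B * C = 1 ∧
      planeLin A B C D (a 1) = c₁⁻¹ • b 1 ∧ planeLin A B C D (a 3) = (c₁ ^ 3)⁻¹ • b 3 := by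
  obtain ⟨A, B, C, D, hdet, h1, h3⟩ := exists_planeLin_eq ha.ne' (c₁⁻¹ • b 1) ((c₁ ^ 3)⁻¹ • b 3)
  refine ⟨A, B, C, D, ?_, h1, h3⟩
  rw [hdet, det2_smul_left, det2_smul_right]
  change _ * (_ * inflDet b) / inflDet a = 1
  rw [hDet]
  field_simp

theorem exists_planeLin_jetComp_eq {a b : ℕ → ℝ × ℝ} (ha2 : det2 (a 1) (a 2) = 0)
    (hb2 : det2 (b 1) (b 2) = 0) (ha : 0 < inflDet a) (hb : 0 < inflDet b)
    (h : inflInv a = inflInv b) :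
    ∃ A B C D : ℝ, A * D - B * C = 1 ∧ ∃ c : ℕ → ℝ, c 0 = 0 ∧ 0 < c 1 ∧
      ∀ k ∈ Finset.Icc 1 4, planeLin A B C D (jetComp a c k) = b k := by
  obtain ⟨c₁, hc₁, hDet, hNum⟩ := exists_scale_of_inflInv_eq ha hb h
  -- coordinates of `a 2`, `a 4` in the basis `a 1, a 3`, and of `b 2`, `b 4` in `b 1, b 3`
  set α := det2 (a 2) (a 3) / inflDet a
  set s := det2 (a 4) (a 3) / inflDet a
  set r := det2 (a 1) (a 4) / inflDet a
  set β := det2 (b 2) (b 3) / inflDet b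
  set S := det2 (b 4) (b 3) / inflDet b
  set R := det2 (b 1) (b 4) / inflDet b
  have ha2' : a 2 = α • a 1 := eq_smul_of_det2_eq_zero ha.ne' ha2
  have hb2' : b 2 = β • b 1 := eq_smul_of_det2_eq_zero hb.ne' hb2
  have ha4' : a 4 = s • a 1 + r • a 3 := eq_smul_add_smul_of_det2_ne_zero ha.ne' _
  have hb4' : b 4 = S • b 1 + R • b 3 := eq_smul_add_smul_of_det2_ne_zero hb.ne' _
  have hcoord : c₁ * (r - 3 * α) = R - 3 * β := by
    rw [inflNum, inflNum] at hNum
    simp only [r, α, R, β, hDet]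
    field_simp
    linear_combination -hNum
  obtain ⟨A, B, C, D, hdet, h1, h3⟩ := exists_planeLin_eq_inv_smul ha hc₁ hDet
  -- `c 3` is chosen to kill the `a 1`-component of `jetComp a c 3`
  set c₂ := c₁ * (β - c₁ * α)
  set c₃ := -2 * c₁ * c₂ * α
  set c₄ := c₁ * S - (2 * c₁ * c₃ + c₂ ^ 2) * α - c₁ ^ 4 * s
  refine ⟨A, B, C, D, hdet, fun k => ([0, c₁, c₂, c₃, c₄] : List ℝ).getD k 0, rfl, hc₁,
    fun k hk => ?_⟩
  obtain rfl | rfl | rfl | rfl : k = 1 ∨ k = 2 ∨ k = 3 ∨ k = 4 := by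
    rw [Finset.mem_Icc] at hk; omega
  all_goals
    simp only [jetComp, List.getD_cons_succ, List.getD_cons_zero]
    simp only [ha2', ha4', hb2', hb4', map_add, map_smul, h1, h3]
  · rw [smul_smul, mul_inv_cancel₀ hc₁.ne', one_smul]
  · match_scalars
    simp only [c₂]
    field_simp
    ring
  · match_scalars
    · simp only [c₃]
      field_simp
      ring
    · field_simp
  · match_scalars
    · simp only [c₄]
      field_simp
      ring
    · simp only [c₂]
      field_simp
      linear_combination hcoord

end PlaneJets

section Inflection

variable {γ : ℝ → ℝ × ℝ}

theorem det2_taylorCoeffWithin_one_two (hi : det2 (deriv γ 0) (iteratedDeriv 2 γ 0) = 0) :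
    det2 (taylorCoeffWithin γ 1 univ 0) (taylorCoeffWithin γ 2 univ 0) = 0 := by
  rw [← iteratedDeriv_one, iteratedDeriv_eq_factorial_smul_taylorCoeffWithin,
    iteratedDeriv_eq_factorial_smul_taylorCoeffWithin, det2_smul_left, det2_smul_right] at hi
  simpa [Nat.factorial] using hi

theorem inflDet_taylorCoeffWithin_pos (hp : 0 < det2 (deriv γ 0) (iteratedDeriv 3 γ 0)) :
    0 < inflDet fun k => taylorCoeffWithin γ k univ 0 := by
  rw [← iteratedDeriv_one, iteratedDeriv_eq_factorial_smul_taylorCoeffWithin,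
    iteratedDeriv_eq_factorial_smul_taylorCoeffWithin, det2_smul_left, det2_smul_right] at hp
  norm_num [Nat.factorial] at hp
  exact hp

theorem muI_eq_mul_inflInv (hp : 0 < det2 (deriv γ 0) (iteratedDeriv 3 γ 0)) :
    muI γ = 24 / 6 ^ (5 / 4 : ℝ) * inflInv fun k => taylorCoeffWithin γ k univ 0 := by
  simp only [muI, ← iteratedDeriv_one, iteratedDeriv_eq_factorial_smul_taylorCoeffWithin,
    det2_smul_left, det2_smul_right] at hp ⊢
  norm_num [Nat.factorial] at hp ⊢
  rw [Real.sign_of_pos (by positivity), abs_of_pos hp, Real.mul_rpow (by norm_num) hp.le, inflInv,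
    inflNum, inflDet]
  field_simp
  ring

end Inflection

theorem stmt_11_general (γ₁ γ₂ : ℝ → ℝ × ℝ)
    (hγ₁ : ContDiff ℝ (⊤:ℕ∞) γ₁) (hγ₂ : ContDiff ℝ (⊤:ℕ∞) γ₂)
    (hi₁ : det2 (deriv γ₁ 0) (iteratedDeriv 2 γ₁ 0) = 0)
    (hi₂ : det2 (deriv γ₂ 0) (iteratedDeriv 2 γ₂ 0) = 0)
    (hp₁ : 0 < det2 (deriv γ₁ 0) (iteratedDeriv 3 γ₁ 0))
    (hp₂ : 0 < det2 (deriv γ₂ 0) (iteratedDeriv 3 γ₂ 0)) :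
    muI γ₁ = muI γ₂ ↔
      ∃ (a b c d : ℝ) (v : ℝ × ℝ), a * d - b * c = 1 ∧
        ∃ ε > (0:ℝ), ∃ u : ℝ → ℝ,
          ContDiffOn ℝ (⊤:ℕ∞) u (Set.Ioo (-ε) ε) ∧ u 0 = 0 ∧ 0 < deriv u 0 ∧
          Tendsto (fun t => (t ^ 4)⁻¹ • (applyAff a b c d v (γ₂ (u t)) - γ₁ t))
            (𝓝[≠] (0:ℝ)) (𝓝 (0 : ℝ × ℝ)) := by
  have hγ₁' : ContDiff ℝ 4 γ₁ := hγ₁.of_le (by norm_cast)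
  have hγ₂' : ContDiff ℝ 4 γ₂ := hγ₂.of_le (by norm_cast)
  rw [muI_eq_mul_inflInv hp₁, muI_eq_mul_inflInv hp₂, mul_right_inj' (by positivity)]
  simp_rw [tendsto_inv_pow_smul_iff_isLittleO, applyAff_eq_planeLin_add]
  constructor
  · intro h
    obtain ⟨A, B, C, D, hdet, c, hc0, hc1, hc⟩ := exists_planeLin_jetComp_eq
      (det2_taylorCoeffWithin_one_two hi₂) (det2_taylorCoeffWithin_one_two hi₁)
      (inflDet_taylorCoeffWithin_pos hp₂) (inflDet_taylorCoeffWithin_pos hp₁) h.symm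
    refine ⟨A, B, C, D,
      taylorCoeffWithin γ₁ 0 univ 0 - planeLin A B C D (taylorCoeffWithin γ₂ 0 univ 0), hdet,
      1, one_pos, jetEval 4 c, (contDiff_jetEval 4 c).contDiffOn,
      by simp [jetEval, Finset.sum_range_succ, hc0], (hasDerivAt_jetEval_zero 3 c).deriv ▸ hc1, ?_⟩
    rw [isLittleO_map_comp_add_sub_iff hγ₁' hγ₂' _ _ hc0 (by simp)]
    exact ⟨add_sub_cancel _ _, hc⟩
  · rintro ⟨A, B, C, D, v, hdet, ε, hε, u, hu, hu0, hu', h⟩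
    have hs : Ioo (-ε) ε ∈ 𝓝 0 := Ioo_mem_nhds (by linarith) hε
    have hc0 : taylorCoeffWithin u 0 (Ioo (-ε) ε) 0 = 0 := by simp [taylorCoeffWithin, hu0]
    have hc1 : 0 < taylorCoeffWithin u 1 (Ioo (-ε) ε) 0 := by
      simpa [taylorCoeffWithin, derivWithin_of_mem_nhds hs] using hu'
    have hu4 := isLittleO_sub_jetEval_taylorCoeffWithin (convex_Ioo _ _) (mem_of_mem_nhds hs)
      (hu.of_le (m := 4) (by norm_cast))
    rw [nhdsWithin_eq_nhds.mpr hs] at hu4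
    rw [isLittleO_map_comp_add_sub_iff hγ₁' hγ₂' _ _ hc0 hu4] at h
    exact inflInv_eq_of_planeLin_jetComp hdet hc1 (det2_taylorCoeffWithin_one_two hi₂)
      (inflDet_taylorCoeffWithin_pos hp₂).le h.2

/-- Two positive generic inflection points have the same affine inflectional curvature
iff they agree, up to an orientation preserving equi-affine transformation and an
orientation preserving change of parameter, to order higher than `t⁴`. -/
theorem stmt_11 (γ₁ γ₂ : ℝ → ℝ × ℝ)
    (hγ₁ : ContDiff ℝ (⊤:ℕ∞) γ₁) (hγ₂ : ContDiff ℝ (⊤:ℕ∞) γ₂)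
    (hr₁ : deriv γ₁ 0 ≠ 0) (hr₂ : deriv γ₂ 0 ≠ 0)
    (hi₁ : det2 (deriv γ₁ 0) (iteratedDeriv 2 γ₁ 0) = 0)
    (hi₂ : det2 (deriv γ₂ 0) (iteratedDeriv 2 γ₂ 0) = 0)
    (hp₁ : 0 < det2 (deriv γ₁ 0) (iteratedDeriv 3 γ₁ 0))
    (hp₂ : 0 < det2 (deriv γ₂ 0) (iteratedDeriv 3 γ₂ 0)) :
    muI γ₁ = muI γ₂ ↔
      ∃ (a b c d : ℝ) (v : ℝ × ℝ), a * d - b * c = 1 ∧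
        ∃ ε > (0:ℝ), ∃ u : ℝ → ℝ,
          ContDiffOn ℝ (⊤:ℕ∞) u (Set.Ioo (-ε) ε) ∧ u 0 = 0 ∧ 0 < deriv u 0 ∧
          Tendsto (fun t => (t ^ 4)⁻¹ • (applyAff a b c d v (γ₂ (u t)) - γ₁ t))
            (𝓝[≠] (0:ℝ)) (𝓝 (0 : ℝ × ℝ)) :=
  stmt_11_general γ₁ γ₂ hγ₁ hγ₂ hi₁ hi₂ hp₁ hp₂
end
end

section
/- Let γ : ℝ → ℝ² be a C^∞ regular curve with a generic inflection point at t = 0. Then the function τ(t) := sgn(t)·|s_A(t)|^{3/4} extends to a C^∞ function on a neighborhood of 0 with τ(0) = 0 and τ'(0) > 0; in particular τ can be taken as a local coordinate of γ at t = 0 (the 3/4-arclength parameter). -/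
noncomputable section
open Real Set Filter Topology

/-!
Write `f = [γ', γ'']`. Then `f 0 = 0` and `f' 0 = [γ'(0), γ'''(0)] ≠ 0`, so by Hadamard's lemma
`f t = t g(t)` with `g` smooth and `g 0 ≠ 0`; hence `|g|^{1/3}` is smooth and positive near `0`.
Substituting `u = t v` gives `s_A(t) = t |t|^{1/3} H(t)` with
`H(t) = ∫₀¹ |v|^{1/3} |g(t v)|^{1/3} dv` smooth and positive, so
`sgn(t) |s_A(t)|^{3/4} = t H(t)^{3/4}`, whose derivative at `0` is `H(0)^{3/4} > 0`.
-/

open scoped ContDiff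
open intervalIntegral MeasureTheory

theorem Real.sign_mul_abs (t : ℝ) : Real.sign t * |t| = t := by
  rcases lt_trichotomy t 0 with h | rfl | h
  · rw [Real.sign_of_neg h, abs_of_neg h]; ring
  · simp
  · rw [Real.sign_of_pos h, abs_of_pos h]; ring

theorem Real.sign_mul_abs_mul_abs_rpow_mul_rpow {p q : ℝ} (hpq : (1 + p) * q = 1) (t : ℝ)
    {h : ℝ} (hh : 0 ≤ h) : Real.sign t * |t * |t| ^ p * h| ^ q = t * h ^ q := by
  rcases eq_or_ne t 0 with rfl | ht
  · simp
  have ht' : 0 < |t| := abs_pos.2 ht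
  have habs : |t * |t| ^ p * h| = |t| ^ (1 + p) * h := by
    rw [abs_mul, abs_mul, abs_of_nonneg hh,
      abs_of_nonneg (Real.rpow_nonneg (abs_nonneg t) p), Real.rpow_add ht', Real.rpow_one]
  rw [habs, Real.mul_rpow (by positivity) hh, ← Real.rpow_mul ht'.le, hpq, Real.rpow_one,
    ← mul_assoc, Real.sign_mul_abs]

theorem integral_abs_rpow_mul_eq (φ : ℝ → ℝ) (p t : ℝ) :
    ∫ u in (0:ℝ)..t, |u| ^ p * φ u = t * |t| ^ p * ∫ v in (0:ℝ)..1, |v| ^ p * φ (t * v) := by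
  have hsubst := smul_integral_comp_mul_left (fun u => |u| ^ p * φ u) t (a := 0) (b := 1)
  simp only [mul_zero, mul_one, smul_eq_mul, abs_mul, Real.mul_rpow (abs_nonneg t) (abs_nonneg _),
    mul_assoc, intervalIntegral.integral_const_mul] at hsubst
  rw [← hsubst, mul_assoc]

section ParametricIntegral

variable {k φ : ℝ → ℝ}

theorem hasDerivAt_integral_mul_comp_mul (hk : Continuous k) (hφ : ContDiff ℝ 1 φ) (t₀ : ℝ) :
    HasDerivAt (fun t => ∫ v in (0:ℝ)..1, k v * φ (t * v))
      (∫ v in (0:ℝ)..1, k v * v * deriv φ (t₀ * v)) t₀ := by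
  have hφ' : Continuous (deriv φ) := hφ.continuous_deriv le_rfl
  obtain ⟨M, hM⟩ := ((isCompact_closedBall t₀ 1).prod isCompact_Icc).exists_bound_of_continuousOn
    (f := fun p : ℝ × ℝ => k p.2 * p.2 * deriv φ (p.1 * p.2)) (by fun_prop)
  have hcont : ∀ t : ℝ, Continuous fun v => k v * φ (t * v) := fun t =>
    hk.mul (hφ.continuous.comp (continuous_const_mul t))
  refine (hasDerivAt_integral_of_dominated_loc_of_deriv_le (bound := fun _ => M)
    (F' := fun t v => k v * v * deriv φ (t * v))
    (Metric.closedBall_mem_nhds t₀ one_pos)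
    (.of_forall fun t => (hcont t).aestronglyMeasurable) ((hcont t₀).intervalIntegrable 0 1)
    (by fun_prop : Continuous fun v => k v * v * deriv φ (t₀ * v)).aestronglyMeasurable
    ?_ intervalIntegrable_const ?_).2
  · refine .of_forall fun v hv t ht => hM (t, v) ⟨ht, ?_⟩
    rw [uIoc_of_le zero_le_one] at hv
    exact Ioc_subset_Icc_self hv
  · refine .of_forall fun v _ t _ => ?_
    have hd := (hφ.differentiable one_ne_zero (t * v)).hasDerivAt.comp t (hasDerivAt_mul_const v)
    exact (hd.const_mul (k v)).congr_deriv (by ring)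

theorem contDiff_integral_mul_comp_mul (hk : Continuous k) (hφ : ContDiff ℝ ∞ φ) :
    ContDiff ℝ ∞ (fun t => ∫ v in (0:ℝ)..1, k v * φ (t * v)) := by
  rw [contDiff_infty]
  intro n
  induction n generalizing k φ with
  | zero =>
    exact contDiff_zero.2 <| continuous_iff_continuousAt.2 fun t =>
      (hasDerivAt_integral_mul_comp_mul hk (hφ.of_le (by simp)) t).continuousAt
  | succ n ih =>
    have hderiv := hasDerivAt_integral_mul_comp_mul hk (hφ.of_le (by simp))
    rw [Nat.cast_succ, contDiff_succ_iff_deriv]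
    refine ⟨fun t => (hderiv t).differentiableAt, by simp, ?_⟩
    rw [funext fun t => (hderiv t).deriv]
    exact ih (hk.mul continuous_id) (contDiff_infty_iff_deriv.1 hφ).2

end ParametricIntegral

theorem exists_contDiff_eq_mul_of_eq_zero {f : ℝ → ℝ} (hf : ContDiff ℝ ∞ f) (h0 : f 0 = 0) :
    ∃ g : ℝ → ℝ, ContDiff ℝ ∞ g ∧ g 0 = deriv f 0 ∧ ∀ t, f t = t * g t := by
  have hf' : ContDiff ℝ ∞ (deriv f) := (contDiff_infty_iff_deriv.1 hf).2
  refine ⟨fun t => ∫ v in (0:ℝ)..1, deriv f (t * v), ?_, by simp, fun t => ?_⟩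
  · simpa using contDiff_integral_mul_comp_mul continuous_const (k := fun _ => 1) hf'
  · have hsubst := smul_integral_comp_mul_left (deriv f) t (a := 0) (b := 1)
    rw [mul_zero, mul_one, integral_deriv_eq_sub (fun x _ => hf.differentiable (by simp) x)
      (hf'.continuous.intervalIntegrable 0 t), h0, sub_zero] at hsubst
    rw [← hsubst, smul_eq_mul]

theorem exists_contDiff_pos_eq_abs_rpow {g : ℝ → ℝ} (hg : ContDiff ℝ ∞ g) (h0 : g 0 ≠ 0) (p : ℝ) :
    ∃ δ > 0, ∃ φ : ℝ → ℝ, ContDiff ℝ ∞ φ ∧ (∀ u, 0 < φ u) ∧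
      ∀ u, |u| ≤ δ → φ u = |g u| ^ p := by
  obtain ⟨r, hr, hnear⟩ := Metric.eventually_nhds_iff.1 <|
    hg.continuous.continuousAt.eventually_mem (Metric.ball_mem_nhds (g 0) (abs_pos.2 h0))
  let B : ContDiffBump (0:ℝ) := ⟨r / 2, r, half_pos hr, half_lt_self hr⟩
  -- `B` glues `g` near `0` to the constant `g 0`, keeping the result away from `0`.
  let g' : ℝ → ℝ := fun u => g 0 + B u * (g u - g 0)
  have hg'_ne : ∀ u, g' u ≠ 0 := by
    intro u
    rcases lt_or_ge (dist u 0) r with h | h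
    · have hB : |B u| ≤ 1 := abs_le.2 ⟨by linarith [B.nonneg (x := u)], B.le_one⟩
      have hclose : |g' u - g 0| < |g 0| :=
        calc |g' u - g 0| = |B u| * |g u - g 0| := by simp only [g', add_sub_cancel_left, abs_mul]
          _ ≤ |g u - g 0| := mul_le_of_le_one_left (abs_nonneg _) hB
          _ < |g 0| := hnear h
      intro hzero
      rw [hzero, zero_sub, abs_neg] at hclose
      exact lt_irrefl _ hclose
    · simpa [g', B.zero_of_le_dist h] using h0
  have hg' : ContDiff ℝ ∞ g' := contDiff_const.add (B.contDiff.mul (hg.sub contDiff_const))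
  refine ⟨r / 2, half_pos hr, fun u => |g' u| ^ p, ?_,
    fun u => Real.rpow_pos_of_pos (abs_pos.2 (hg'_ne u)) p, fun u hu => ?_⟩
  · exact contDiff_iff_contDiffAt.2 fun u =>
      (hg'.contDiffAt.abs (hg'_ne u)).rpow_const_of_ne (abs_ne_zero.2 (hg'_ne u))
  · have hB : B u = 1 := B.one_of_mem_closedBall (by simpa using hu)
    simp only [g', hB, one_mul, add_sub_cancel]

theorem exists_integral_abs_rpow_eq_mul_abs_rpow_mul {f : ℝ → ℝ} (hf : ContDiff ℝ ∞ f)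
    (h0 : f 0 = 0) (hd : deriv f 0 ≠ 0) {p : ℝ} (hp : 0 ≤ p) :
    ∃ δ > 0, ∃ H : ℝ → ℝ, ContDiff ℝ ∞ H ∧ (∀ t, 0 < H t) ∧
      ∀ t, |t| ≤ δ → ∫ u in (0:ℝ)..t, |f u| ^ p = t * |t| ^ p * H t := by
  obtain ⟨g, hg, hg0, hfg⟩ := exists_contDiff_eq_mul_of_eq_zero hf h0
  obtain ⟨δ, hδ, φ, hφ, hφ_pos, hφg⟩ := exists_contDiff_pos_eq_abs_rpow hg (hg0 ▸ hd) p
  have hk : Continuous fun v : ℝ => |v| ^ p := continuous_abs.rpow_const fun _ => .inr hp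
  refine ⟨δ, hδ, fun t => ∫ v in (0:ℝ)..1, |v| ^ p * φ (t * v),
    contDiff_integral_mul_comp_mul hk hφ, fun t => ?_, fun t ht => ?_⟩
  · refine intervalIntegral_pos_of_pos_on ?_ (fun v hv => ?_) one_pos
    · exact (hk.mul (hφ.continuous.comp (continuous_const_mul t))).intervalIntegrable 0 1
    · exact mul_pos (Real.rpow_pos_of_pos (abs_pos.2 hv.1.ne') p) (hφ_pos _)
  rw [← integral_abs_rpow_mul_eq]
  refine integral_congr fun u hu => ?_
  have hu : |u| ≤ δ := by
    simpa using (abs_sub_left_of_mem_uIcc hu).trans (by rwa [sub_zero])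
  simp only [hfg u, abs_mul, Real.mul_rpow (abs_nonneg u) (abs_nonneg _), hφg u hu]

theorem HasDerivAt.det2 {a b : ℝ → ℝ × ℝ} {a' b' : ℝ × ℝ} {t : ℝ} (ha : HasDerivAt a a' t)
    (hb : HasDerivAt b b' t) :
    HasDerivAt (fun s => det2 (a s) (b s)) (det2 a' (b t) + det2 (a t) b') t := by
  have hfst {c : ℝ → ℝ × ℝ} {c'} (hc : HasDerivAt c c' t) : HasDerivAt (fun s => (c s).1) c'.1 t :=
    (ContinuousLinearMap.fst ℝ ℝ ℝ).hasFDerivAt.comp_hasDerivAt t hc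
  have hsnd {c : ℝ → ℝ × ℝ} {c'} (hc : HasDerivAt c c' t) : HasDerivAt (fun s => (c s).2) c'.2 t :=
    (ContinuousLinearMap.snd ℝ ℝ ℝ).hasFDerivAt.comp_hasDerivAt t hc
  exact (((hfst ha).fun_mul (hsnd hb)).fun_sub ((hsnd ha).fun_mul (hfst hb))).congr_deriv
    (by simp only [_root_.det2]; ring)

theorem ContDiff.det2 {a b : ℝ → ℝ × ℝ} {n : WithTop ℕ∞} (ha : ContDiff ℝ n a)
    (hb : ContDiff ℝ n b) : ContDiff ℝ n (fun s => det2 (a s) (b s)) := by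
  unfold _root_.det2
  fun_prop

theorem hasDerivAt_det2_deriv_iteratedDeriv_two {γ : ℝ → ℝ × ℝ} (hγ : ContDiff ℝ 3 γ) (t : ℝ) :
    HasDerivAt (fun s => det2 (deriv γ s) (iteratedDeriv 2 γ s))
      (det2 (deriv γ t) (iteratedDeriv 3 γ t)) t := by
  have h1 : HasDerivAt (deriv γ) (iteratedDeriv 2 γ t) t := by
    have h := (hγ.differentiable_iteratedDeriv 1 (by norm_num) t).hasDerivAt
    rwa [← iteratedDeriv_succ, iteratedDeriv_one] at h
  have h2 : HasDerivAt (iteratedDeriv 2 γ) (iteratedDeriv 3 γ t) t := by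
    have h := (hγ.differentiable_iteratedDeriv 2 (by norm_num) t).hasDerivAt
    rwa [← iteratedDeriv_succ] at h
  convert h1.det2 h2 using 1
  simp only [det2]
  ring

/-- At a generic inflection point, `τ(t) = sgn(t)·|s_A(t)|^{3/4}` extends to a `C^∞`
function near `0` with `τ(0) = 0` and `τ'(0) > 0`, so it is a local coordinate
(3/4-arclength parameter). -/
theorem stmt_13 (γ : ℝ → ℝ × ℝ) (hγ : ContDiff ℝ (⊤:ℕ∞) γ)
    (hinf : HasGenericInflection γ) :
    ∃ ε > (0:ℝ), ∃ τ : ℝ → ℝ, ContDiffOn ℝ (⊤:ℕ∞) τ (Set.Ioo (-ε) ε) ∧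
      (∀ t ∈ Set.Ioo (-ε) ε, τ t = Real.sign t * |sA γ t| ^ ((3:ℝ)/4)) ∧
      τ 0 = 0 ∧ 0 < deriv τ 0 := by
  have hf : ContDiff ℝ ∞ (fun s => det2 (deriv γ s) (iteratedDeriv 2 γ s)) := by
    refine ContDiff.det2 (hγ.iterate_deriv 1) ?_
    rw [iteratedDeriv_eq_iterate]
    exact hγ.iterate_deriv 2
  have hf' : deriv (fun s => det2 (deriv γ s) (iteratedDeriv 2 γ s)) 0 ≠ 0 := by
    rw [(hasDerivAt_det2_deriv_iteratedDeriv_two (hγ.of_le (by norm_cast)) 0).deriv]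
    exact hinf.2.2
  obtain ⟨δ, hδ, H, hH, hH_pos, hsA⟩ :=
    exists_integral_abs_rpow_eq_mul_abs_rpow_mul hf hinf.2.1 hf' (p := 1 / 3) (by norm_num)
  have hH' : ContDiff ℝ ∞ fun t => H t ^ ((3:ℝ) / 4) := hH.rpow_const_of_ne fun t => (hH_pos t).ne'
  refine ⟨δ, hδ, fun t => t * H t ^ ((3:ℝ) / 4), (contDiff_id.mul hH').contDiffOn,
    fun t ht => ?_, by simp, ?_⟩
  · rw [sA, hsA t (abs_lt.2 ht).le,
      Real.sign_mul_abs_mul_abs_rpow_mul_rpow (by norm_num) t (hH_pos t).le]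
  · have hτ : HasDerivAt (fun t => t * H t ^ ((3:ℝ) / 4)) (H 0 ^ ((3:ℝ) / 4)) 0 := by
      simpa using (hasDerivAt_id' 0).fun_mul (hH'.differentiable (by simp) 0).hasDerivAt
    exact hτ.deriv ▸ Real.rpow_pos_of_pos (hH_pos 0) _
end
end

section
/- Let φ : ℝ → ℝ be a C^∞ function near t = 0 and let α > 0 be a real number. Define Φ(t) := ∫₀ᵗ |u|^α·φ(u) du and, for t ≠ 0, f(t) := Φ(t)/(sgn(t)·|t|^{1+α}). Then f extends to a C^∞ function at t = 0, and its value at 0 is φ(0)/(1+α). -/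
/-!
The substitution `u = t s` gives `Φ(t) = t |t|^α ∫₀¹ |s|^α φ(t s) ds`, and
`sgn(t) |t|^(1+α) = t |t|^α`, so `f(t) = ∫₀¹ |s|^α φ(t s) ds` for `t ≠ 0`. Once `φ` is cut off to
a smooth function on all of `ℝ`, this parametric integral is smooth: differentiating under the
integral sign produces an integral of the same shape, with weight `s |s|^α` and integrand `φ'`.
At `t = 0` it equals `φ(0) ∫₀¹ s^α ds = φ(0)/(1+α)`.
-/

noncomputable section
open Real Set Filter Topology

open Metric in
theorem ContDiffOn.exists_contDiff_eqOn_closedBall {E F : Type*} [NormedAddCommGroup E]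
    [NormedSpace ℝ E] [HasContDiffBump E] [NormedAddCommGroup F] [NormedSpace ℝ F]
    {f : E → F} {c : E} {r R : ℝ} {n : ℕ∞} (hf : ContDiffOn ℝ n f (ball c R))
    (hr : 0 < r) (hrR : r < R) :
    ∃ g : E → F, ContDiff ℝ n g ∧ EqOn g f (closedBall c r) := by
  let b : ContDiffBump c := ⟨r, (r + R) / 2, hr, by linarith⟩
  refine ⟨fun x ↦ b x • f x, contDiff_iff_contDiffAt.2 fun x ↦ ?_, fun x hx ↦ ?_⟩
  · by_cases hx : x ∈ ball c R
    · exact b.contDiffAt.smul (hf.contDiffAt (isOpen_ball.mem_nhds hx))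
    · have hxb : x ∉ tsupport b := by
        rw [b.tsupport_eq, mem_closedBall, not_le]
        exact lt_of_lt_of_le (by change (r + R) / 2 < R; linarith) (not_lt.1 hx)
      refine (contDiffAt_const (c := (0 : F))).congr_of_eventuallyEq ?_
      filter_upwards [notMem_tsupport_iff_eventuallyEq.1 hxb] with y hy
      simp [hy]
  · simp [b.one_of_mem_closedBall hx]

section

variable {w g : ℝ → ℝ} {a b : ℝ}

theorem hasDerivAt_intervalIntegral_mul_comp_mul (hw : Continuous w) (hg : ContDiff ℝ 1 g)
    (t₀ : ℝ) :
    HasDerivAt (fun t ↦ ∫ s in a..b, w s * g (t * s))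
      (∫ s in a..b, s * w s * deriv g (t₀ * s)) t₀ := by
  have hg' : Continuous (deriv g) := hg.continuous_deriv_one
  have hcont : Continuous fun p : ℝ × ℝ ↦ p.2 * w p.2 * deriv g (p.1 * p.2) := by fun_prop
  obtain ⟨C, hC⟩ := ((isCompact_closedBall t₀ 1).prod isCompact_uIcc).exists_bound_of_continuousOn
    hcont.continuousOn
  refine (intervalIntegral.hasDerivAt_integral_of_dominated_loc_of_deriv_le
    (F := fun t s ↦ w s * g (t * s)) (F' := fun t s ↦ s * w s * deriv g (t * s))
    (bound := fun _ ↦ C) (Metric.ball_mem_nhds t₀ one_pos)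
    (.of_forall fun t ↦ (by fun_prop : Continuous _).aestronglyMeasurable)
    ((by fun_prop : Continuous _).intervalIntegrable _ _)
    (by fun_prop : Continuous _).aestronglyMeasurable
    (.of_forall fun s hs t ht ↦ ?_) intervalIntegrable_const (.of_forall fun s _ t _ ↦ ?_)).2
  · exact hC (t, s) ⟨Metric.ball_subset_closedBall ht, uIoc_subset_uIcc hs⟩
  · exact (((hg.differentiable one_ne_zero (t * s)).hasDerivAt.comp t
      (hasDerivAt_mul_const s)).const_mul (w s)).congr_deriv (by ring)

theorem contDiff_intervalIntegral_mul_comp_mul {n : ℕ∞} (hw : Continuous w)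
    (hg : ContDiff ℝ n g) : ContDiff ℝ n fun t ↦ ∫ s in a..b, w s * g (t * s) := by
  suffices h : ∀ k : ℕ, ∀ {w g : ℝ → ℝ}, Continuous w → ContDiff ℝ k g →
      ContDiff ℝ k fun t ↦ ∫ s in a..b, w s * g (t * s) by
    induction n with
    | top => exact contDiff_infty.2 fun k ↦ h k hw (hg.of_le (by exact_mod_cast le_top))
    | coe k => exact h k hw hg
  intro k
  induction k with
  | zero =>
    intro w g hw hg
    exact contDiff_zero.2 (intervalIntegral.continuous_parametric_intervalIntegral_of_continuous'
      (by have := hg.continuous; fun_prop) a b)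
  | succ k ih =>
    intro w g hw hg
    have hg1 : ContDiff ℝ 1 g := hg.of_le (by exact_mod_cast Nat.le_add_left 1 k)
    have hderiv := hasDerivAt_intervalIntegral_mul_comp_mul (a := a) (b := b) hw hg1
    rw [Nat.cast_add_one, contDiff_succ_iff_deriv]
    refine ⟨fun t ↦ (hderiv t).differentiableAt, by simp, ?_⟩
    rw [funext fun t ↦ (hderiv t).deriv]
    exact ih (by fun_prop) (by rw [Nat.cast_add_one] at hg; exact hg.deriv')

end

theorem integral_abs_rpow_mul_eq_mul_integral_comp_mul (g : ℝ → ℝ) (α t : ℝ) :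
    ∫ u in (0:ℝ)..t, |u| ^ α * g u = t * |t| ^ α * ∫ s in (0:ℝ)..1, |s| ^ α * g (t * s) := by
  have hdilate : ∀ s, |t * s| ^ α * g (t * s) = |t| ^ α * (|s| ^ α * g (t * s)) := fun s ↦ by
    rw [abs_mul, mul_rpow (abs_nonneg t) (abs_nonneg s), mul_assoc]
  have := intervalIntegral.smul_integral_comp_mul_left (fun u ↦ |u| ^ α * g u) t (a := 0) (b := 1)
  simp only [hdilate, intervalIntegral.integral_const_mul, mul_zero, mul_one, smul_eq_mul] at this
  rw [← this, mul_assoc]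

theorem integral_abs_rpow_zero_one {α : ℝ} (hα : -1 < α) :
    ∫ s in (0:ℝ)..1, |s| ^ α = 1 / (α + 1) := by
  have habs : EqOn (fun s : ℝ ↦ |s| ^ α) (fun s ↦ s ^ α) (uIcc 0 1) := fun s hs ↦ by
    rw [uIcc_of_le zero_le_one] at hs
    simp only [abs_of_nonneg hs.1]
  rw [intervalIntegral.integral_congr habs, integral_rpow (.inl hα), one_rpow,
    zero_rpow (by linarith), sub_zero]

theorem Real.sign_mul_abs_rpow_one_add {t : ℝ} (ht : t ≠ 0) (α : ℝ) :
    Real.sign t * |t| ^ (1 + α) = t * |t| ^ α := by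
  rw [rpow_add (abs_pos.2 ht), rpow_one, ← mul_assoc]
  rcases ht.lt_or_gt with h | h
  · rw [sign_of_neg h, abs_of_neg h, neg_one_mul, neg_neg]
  · rw [sign_of_pos h, abs_of_pos h, one_mul]

/-- Division lemma: for `φ` smooth near `0` and `α > 0`, the function
`f(t) = (∫₀ᵗ |u|^α φ(u) du)/(sgn(t)·|t|^{1+α})` extends to a `C^∞` function at `0`
with value `φ(0)/(1+α)`. -/
theorem stmt_19 (φ : ℝ → ℝ) (ε : ℝ) (hε : 0 < ε)
    (hφ : ContDiffOn ℝ (⊤:ℕ∞) φ (Set.Ioo (-ε) ε)) (α : ℝ) (hα : 0 < α) :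
    ∃ δ > (0:ℝ), ∃ f : ℝ → ℝ,
      ContDiffOn ℝ (⊤:ℕ∞) f (Set.Ioo (-δ) δ) ∧
      (∀ t ∈ Set.Ioo (-δ) δ, t ≠ 0 →
        f t = (∫ u in (0:ℝ)..t, |u| ^ α * φ u) / (Real.sign t * |t| ^ (1 + α))) ∧
      f 0 = φ 0 / (1 + α) := by
  rw [← Real.ball_zero_eq_Ioo] at hφ
  obtain ⟨ψ, hψ, hψφ⟩ := hφ.exists_contDiff_eqOn_closedBall (half_pos hε) (half_lt_self hε)
  rw [Real.closedBall_zero_eq_Icc] at hψφ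
  have h0 : (0 : ℝ) ∈ Icc (-(ε / 2)) (ε / 2) := ⟨by linarith, by linarith⟩
  have hw : Continuous fun s : ℝ ↦ |s| ^ α := continuous_abs.rpow_const fun _ ↦ .inr hα.le
  refine ⟨ε / 2, half_pos hε, fun t ↦ ∫ s in (0:ℝ)..1, |s| ^ α * ψ (t * s),
    (contDiff_intervalIntegral_mul_comp_mul hw hψ).contDiffOn, fun t ht ht0 ↦ ?_, ?_⟩
  · have hφψ : EqOn (fun u ↦ |u| ^ α * φ u) (fun u ↦ |u| ^ α * ψ u) (uIcc 0 t) := fun u hu ↦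
      congrArg (|u| ^ α * ·) (hψφ (uIcc_subset_Icc h0 (Ioo_subset_Icc_self ht) hu)).symm
    rw [intervalIntegral.integral_congr hφψ,
      integral_abs_rpow_mul_eq_mul_integral_comp_mul, Real.sign_mul_abs_rpow_one_add ht0,
      mul_div_cancel_left₀ _ (mul_ne_zero ht0 (by positivity))]
  · simp only [zero_mul, intervalIntegral.integral_mul_const,
      integral_abs_rpow_zero_one (by linarith : (-1 : ℝ) < α), hψφ h0]
    ring
end
end
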